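/- arXiv:1612.09471 — 6 statements merged into one kernel-verified Lean document; each statement's English description precedes it below -/
import Mathlib

section
/- If S is an invertible n×n equiangular matrix with parameter α ∈ (0,1), n ≥ 2, then the cosine of the angle between any two distinct rows of S⁻¹ equals α' = -α/(1+(n-2)α), which is negative; i.e., the rows of S⁻¹ are equiangular with angle greater than π/2. -/
open Matrix
open scoped RealInnerProductSpace

noncomputable def Gmat (n : ℕ) (α : ℝ) : Matrix (Fin n) (Fin n) ℝ :=
  (1 - α) • (1 : Matrix (Fin n) (Fin n) ℝ) + α • (Matrix.of fun _ _ => (1 : ℝ))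

noncomputable def invRow (n : ℕ) (S : Matrix (Fin n) (Fin n) ℝ) (i : Fin n) :
    EuclideanSpace ℝ (Fin n) :=
  (WithLp.equiv 2 (Fin n → ℝ)).symm (fun k => S⁻¹ i k)

/-! The rows of `S⁻¹` have Gram matrix `S⁻¹ (S⁻¹)ᵀ = (Sᵀ S)⁻¹ = G⁻¹`, and the inverse of
`G = (1 - α) I + α J` is again of the form `a I + b J` (because `J² = n J`). Reading off its
diagonal and off-diagonal entries gives the common squared norm and inner product of the rows. -/

lemma real_inner_div_norm_mul_norm_of_inner_self_eq {E : Type*} [NormedAddCommGroup E]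
    [InnerProductSpace ℝ E] {u v : E} {c : ℝ} (hu : ⟪u, u⟫ = c) (hv : ⟪v, v⟫ = c) :
    ⟪u, v⟫ / (‖u‖ * ‖v‖) = ⟪u, v⟫ / c := by
  rw [real_inner_self_eq_norm_mul_norm] at hu hv
  have hnorm : ‖u‖ = ‖v‖ := by nlinarith [norm_nonneg u, norm_nonneg v]
  rw [← hnorm, hu]

lemma real_inner_invRow (n : ℕ) (S : Matrix (Fin n) (Fin n) ℝ) (i j : Fin n) :
    ⟪invRow n S i, invRow n S j⟫ = (Sᵀ * S)⁻¹ i j := by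
  rw [Matrix.mul_inv_rev, ← Matrix.transpose_nonsing_inv, Matrix.mul_apply]
  simp [invRow, PiLp.inner_apply, mul_comm]

section Gmat

variable {n : ℕ} {α : ℝ}

lemma of_one_mul_of_one :
    (Matrix.of fun _ _ => (1 : ℝ)) * (Matrix.of fun _ _ => (1 : ℝ)) =
      (n : ℝ) • (Matrix.of fun _ _ => (1 : ℝ) : Matrix (Fin n) (Fin n) ℝ) := by
  ext i j
  simp [Matrix.mul_apply]

lemma Gmat_inv (hα : α ≠ 1) (hn : 1 + ((n : ℝ) - 1) * α ≠ 0) :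
    (Gmat n α)⁻¹ = (1 - α)⁻¹ • (1 : Matrix (Fin n) (Fin n) ℝ)
      - (α / ((1 - α) * (1 + ((n : ℝ) - 1) * α))) • Matrix.of fun _ _ => (1 : ℝ) := by
  have hα' : 1 - α ≠ 0 := sub_ne_zero.mpr hα.symm
  refine Matrix.inv_eq_left_inv ?_
  simp only [Gmat, Matrix.sub_mul, Matrix.mul_add, Matrix.smul_mul, Matrix.mul_smul,
    Matrix.one_mul, Matrix.mul_one, of_one_mul_of_one]
  set d := 1 + ((n : ℝ) - 1) * α
  match_scalars
  · field_simp
  · field_simp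
    ring

lemma Gmat_inv_apply_self (hα : α ≠ 1) (hn : 1 + ((n : ℝ) - 1) * α ≠ 0) (i : Fin n) :
    (Gmat n α)⁻¹ i i = (1 + ((n : ℝ) - 2) * α) / ((1 - α) * (1 + ((n : ℝ) - 1) * α)) := by
  have hα' : 1 - α ≠ 0 := sub_ne_zero.mpr hα.symm
  rw [Gmat_inv hα hn]
  simp only [Matrix.sub_apply, Matrix.smul_apply, Matrix.one_apply_eq, Matrix.of_apply,
    smul_eq_mul, mul_one]
  set d := 1 + ((n : ℝ) - 1) * α with hd
  field_simp
  rw [hd]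
  ring

lemma Gmat_inv_apply_of_ne (hα : α ≠ 1) (hn : 1 + ((n : ℝ) - 1) * α ≠ 0) {i j : Fin n}
    (hij : i ≠ j) :
    (Gmat n α)⁻¹ i j = -α / ((1 - α) * (1 + ((n : ℝ) - 1) * α)) := by
  rw [Gmat_inv hα hn]
  simp [Matrix.one_apply_ne hij, neg_div]

end Gmat

theorem stmt5_general (n : ℕ) (hn : 2 ≤ n) (α : ℝ) (hα₁ : 0 < α) (hα₂ : α < 1)
    (S : Matrix (Fin n) (Fin n) ℝ)
    (hEq : Sᵀ * S = Gmat n α) :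
    (∀ i j : Fin n, i ≠ j →
      ⟪invRow n S i, invRow n S j⟫ / (‖invRow n S i‖ * ‖invRow n S j‖)
        = -α / (1 + ((n : ℝ) - 2) * α)) ∧
    -α / (1 + ((n : ℝ) - 2) * α) < 0 := by
  have hn' : (2 : ℝ) ≤ n := by exact_mod_cast hn
  have hα : α ≠ 1 := hα₂.ne
  have hpos₁ : 0 < 1 - α := by linarith
  have hpos₂ : 0 < 1 + ((n : ℝ) - 2) * α := by nlinarith
  have hpos₃ : 0 < 1 + ((n : ℝ) - 1) * α := by nlinarith
  refine ⟨fun i j hij => ?_, div_neg_of_neg_of_pos (neg_neg_of_pos hα₁) hpos₂⟩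
  have hself : ∀ k, ⟪invRow n S k, invRow n S k⟫ = (Gmat n α)⁻¹ i i := fun k => by
    rw [real_inner_invRow, hEq, Gmat_inv_apply_self hα hpos₃.ne', Gmat_inv_apply_self hα hpos₃.ne']
  rw [real_inner_div_norm_mul_norm_of_inner_self_eq (hself i) (hself j), real_inner_invRow, hEq,
    Gmat_inv_apply_of_ne hα hpos₃.ne' hij, Gmat_inv_apply_self hα hpos₃.ne',
    div_div_div_cancel_right₀ (mul_pos hpos₁ hpos₃).ne']

/-- The rows of `S⁻¹` are equiangular with cosine `α' = -α/(1+(n-2)α) < 0`,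
i.e. the angle between any two distinct rows exceeds `π/2`. -/
theorem stmt5 (n : ℕ) (hn : 2 ≤ n) (α : ℝ) (hα₁ : 0 < α) (hα₂ : α < 1)
    (S : Matrix (Fin n) (Fin n) ℝ) (hS : IsUnit S.det)
    (hEq : Sᵀ * S = Gmat n α) :
    (∀ i j : Fin n, i ≠ j →
      ⟪invRow n S i, invRow n S j⟫ / (‖invRow n S i‖ * ‖invRow n S j‖)
        = -α / (1 + ((n : ℝ) - 2) * α)) ∧
    -α / (1 + ((n : ℝ) - 2) * α) < 0 :=
  stmt5_general n hn α hα₁ hα₂ S hEq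
end

section
/- For α ∈ (-1/(n-1), 1), the matrix S̄_α = (s-t)·I_n + t·J_n with s = (√(1+(n-1)α) + (n-1)√(1-α))/n and t = (√(1+(n-1)α) - √(1-α))/n is symmetric positive definite and satisfies S̄_α² = G_α; i.e., S̄_α is the principal square root of G_α. -/
open Matrix

noncomputable def Sbar (n : ℕ) (α : ℝ) : Matrix (Fin n) (Fin n) ℝ :=
  let s : ℝ := (Real.sqrt (1 + ((n : ℝ) - 1) * α) + ((n : ℝ) - 1) * Real.sqrt (1 - α)) / n
  let t : ℝ := (Real.sqrt (1 + ((n : ℝ) - 1) * α) - Real.sqrt (1 - α)) / n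
  (s - t) • (1 : Matrix (Fin n) (Fin n) ℝ) + t • (Matrix.of fun _ _ => (1 : ℝ))

section AllOnes

variable {ι R : Type*} [Fintype ι]

theorem of_one_mul_of_one_s11 [NonAssocSemiring R] :
    (of fun _ _ => (1 : R) : Matrix ι ι R) * of (fun _ _ => 1) =
      (Fintype.card ι : R) • of fun _ _ => 1 := by
  ext i j
  simp [mul_apply]

theorem of_one_mulVec [NonAssocSemiring R] (x : ι → R) :
    (of fun _ _ => (1 : R) : Matrix ι ι R) *ᵥ x = fun _ => ∑ i, x i := by
  ext i
  simp [mulVec, dotProduct]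

variable [DecidableEq ι]

theorem smul_one_add_smul_of_one_mul [CommRing R] (a b c d : R) :
    (a • 1 + b • of fun _ _ => 1 : Matrix ι ι R) * (c • 1 + d • of fun _ _ => 1) =
      (a * c) • 1 + (a * d + b * c + Fintype.card ι * b * d) • of fun _ _ => 1 := by
  simp only [add_mul, mul_add, Matrix.smul_mul, Matrix.mul_smul, of_one_mul_of_one_s11, one_mul,
    mul_one]
  module

omit [Fintype ι] in
theorem isSymm_smul_one_add_smul_of_one [Semiring R] (a b : R) :
    (a • 1 + b • of fun _ _ => 1 : Matrix ι ι R).IsSymm := by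
  simp only [IsSymm, transpose_add, transpose_smul, transpose_one]
  congr

theorem dotProduct_smul_one_add_smul_of_one_mulVec [CommRing R] (a b : R) (x : ι → R) :
    x ⬝ᵥ ((a • 1 + b • of fun _ _ => 1 : Matrix ι ι R) *ᵥ x) =
      a * ∑ i, x i ^ 2 + b * (∑ i, x i) ^ 2 := by
  simp only [add_mulVec, smul_mulVec, one_mulVec, of_one_mulVec, dotProduct_add, dotProduct_smul]
  simp [dotProduct, sq, Finset.sum_mul]

theorem posDef_smul_one_add_smul_of_one {a b : ℝ} (ha : 0 < a)
    (hab : 0 < a + Fintype.card ι * b) :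
    (a • 1 + b • of fun _ _ => 1 : Matrix ι ι ℝ).PosDef := by
  refine posDef_iff_dotProduct_mulVec.mpr ⟨isSymm_smul_one_add_smul_of_one a b, fun x hx => ?_⟩
  rw [star_trivial, dotProduct_smul_one_add_smul_of_one_mulVec]
  have hsq : 0 < ∑ i, x i ^ 2 := by
    obtain ⟨i, hi⟩ := Function.ne_iff.mp hx
    exact Finset.sum_pos' (fun j _ => sq_nonneg _) ⟨i, Finset.mem_univ i, sq_pos_of_ne_zero hi⟩
  have hCS : (∑ i, x i) ^ 2 ≤ Fintype.card ι * ∑ i, x i ^ 2 := by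
    simpa using sq_sum_le_card_mul_sum_sq (s := Finset.univ) (f := x)
  rcases le_or_gt 0 b with hb | hb
  · nlinarith [sq_nonneg (∑ i, x i)]
  · nlinarith [mul_le_mul_of_nonpos_left hCS hb.le]

end AllOnes

theorem one_add_mul_pos_of_neg_one_div_lt {m α : ℝ} (hm : 0 ≤ m) (h : -1 / m < α) :
    0 < 1 + m * α := by
  rcases hm.eq_or_lt with rfl | hm
  · simp
  · linarith [(div_lt_iff₀ hm).1 h]

theorem Sbar_eq {n : ℕ} (hn : n ≠ 0) (α : ℝ) :
    Sbar n α = √(1 - α) • 1 +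
      ((√(1 + ((n : ℝ) - 1) * α) - √(1 - α)) / n) • of fun _ _ => 1 := by
  rw [Sbar]
  congr 2
  field_simp
  ring

theorem stmt11_general (n : ℕ) (α : ℝ)
    (hα₁ : -1 / ((n : ℝ) - 1) < α) (hα₂ : α < 1) :
    (Sbar n α).IsSymm ∧ (Sbar n α).PosDef ∧ Sbar n α * Sbar n α = Gmat n α := by
  have hn : n ≠ 0 := by
    rintro rfl
    norm_num at hα₁
    linarith
  have hn₀ : (n : ℝ) ≠ 0 := by exact_mod_cast hn
  have hn₁ : (0 : ℝ) ≤ n - 1 := by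
    have : (1 : ℝ) ≤ n := by exact_mod_cast Nat.one_le_iff_ne_zero.mpr hn
    linarith
  have hA : 0 < 1 - α := by linarith
  have hB : 0 < 1 + ((n : ℝ) - 1) * α := one_add_mul_pos_of_neg_one_div_lt hn₁ hα₁
  rw [Sbar_eq hn]
  set a := √(1 - α)
  set b := √(1 + ((n : ℝ) - 1) * α)
  have hsum : a + (Fintype.card (Fin n) : ℝ) * ((b - a) / n) = b := by
    rw [Fintype.card_fin]
    field_simp
    ring
  refine ⟨isSymm_smul_one_add_smul_of_one _ _,
    posDef_smul_one_add_smul_of_one (Real.sqrt_pos.2 hA) (hsum.symm ▸ Real.sqrt_pos.2 hB), ?_⟩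
  rw [smul_one_add_smul_of_one_mul, Gmat, Fintype.card_fin]
  have ha : a * a = 1 - α := Real.mul_self_sqrt hA.le
  have hb : b * b = 1 + ((n : ℝ) - 1) * α := Real.mul_self_sqrt hB.le
  congr 2
  field_simp
  linear_combination hb - ha

/-- `S̄_α` is symmetric positive definite and squares to `G_α`: it is the
principal square root of `G_α`. -/
theorem stmt11 (n : ℕ) (hn : 1 ≤ n) (α : ℝ)
    (hα₁ : -1 / ((n : ℝ) - 1) < α) (hα₂ : α < 1) :
    (Sbar n α).IsSymm ∧ (Sbar n α).PosDef ∧ Sbar n α * Sbar n α = Gmat n α :=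
  stmt11_general n α hα₁ hα₂
end

section
/- There is a unique upper triangular n×n matrix Ŝ with positive diagonal entries whose columns are unit vectors with pairwise inner products all equal to α ∈ (0,1); its entries satisfy ŝ₁₁ = 1, ŝ_{i,i+1} = ... = ŝ_{i,n} = ŝ_{ii} - (1-α)/ŝ_{ii}, and ŝ_{ii}² = 1 - (ŝ_{1i}² + ... + ŝ_{i-1,i}²). -/
/-!
An upper triangular factor `S` of a Gram matrix with positive diagonal is determined row by row
(uniqueness of the Cholesky factor): row `i` of `SᵀS` gives `S i i * S i j` in terms of the rows
above. For the equiangular Gram matrix an explicit factor has constant rows beyond the diagonal: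
with the residuals `q 0 = α`, `q (i + 1) = q i (1 - α) / (1 - α + q i)`, take
`S i i = √(1 - α + q i)` and `S i j = S i i - (1 - α) / S i i` for `i < j`; these entries make the
squares above the diagonal telescope to `α - q i`. Every factor equals this one, so has its entries.
-/

open Matrix

open Finset

namespace Matrix.BlockTriangular

variable {ι R : Type*} [Fintype ι] [LinearOrder ι] [LocallyFiniteOrderBot ι]

theorem transpose_mul_self_apply [CommRing R] {A : Matrix ι ι R} (hA : A.BlockTriangular id)
    (i j : ι) : (Aᵀ * A) i j = ∑ k ∈ Iio i, A k i * A k j + A i i * A i j := by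
  rw [mul_apply, ← sum_subset (subset_univ (Iic i)), ← Iio_insert, sum_insert notMem_Iio_self,
    add_comm]
  · rfl
  · intro k _ hk
    rw [transpose_apply, hA (not_le.1 (mem_Iic.not.1 hk)), zero_mul]

theorem sq_diag_eq [CommRing R] {A : Matrix ι ι R} (hA : A.BlockTriangular id) (i : ι) :
    A i i ^ 2 = (Aᵀ * A) i i - ∑ k ∈ Iio i, A k i ^ 2 := by
  simp only [hA.transpose_mul_self_apply, sq, add_sub_cancel_left]

theorem eq_of_transpose_mul_self_eq [Field R] [LinearOrder R] [IsStrictOrderedRing R]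
    {A B : Matrix ι ι R} (hA : A.BlockTriangular id) (hB : B.BlockTriangular id)
    (hA₀ : ∀ i, 0 < A i i) (hB₀ : ∀ i, 0 < B i i) (h : Aᵀ * A = Bᵀ * B) : A = B := by
  ext i j
  induction i using WellFoundedLT.induction generalizing j with
  | _ i ih =>
  have hrow : ∀ j, A i i * A i j = B i i * B i j := by
    intro j
    have hij := congrFun (congrFun h i) j
    rw [hA.transpose_mul_self_apply, hB.transpose_mul_self_apply,
      sum_congr rfl fun k hk => by rw [ih k (mem_Iio.1 hk), ih k (mem_Iio.1 hk)]] at hij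
    exact add_left_cancel hij
  have hdiag : A i i = B i i := (mul_self_inj (hA₀ i).le (hB₀ i).le).1 (hrow i)
  exact mul_left_cancel₀ (hA₀ i).ne' (by rw [hrow j, hdiag])

end Matrix.BlockTriangular

theorem Gmat_apply (n : ℕ) (α : ℝ) (i j : Fin n) : Gmat n α i j = if i = j then 1 else α := by
  simp only [Gmat, Matrix.add_apply, Matrix.smul_apply, one_apply, of_apply, smul_eq_mul]
  split_ifs <;> ring

namespace Equiangular

variable (α : ℝ)

/-- In closed form, `residual α i = α (1 - α) / (1 + (i - 1) α)`. -/
noncomputable def residual : ℕ → ℝ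
  | 0 => α
  | i + 1 => residual i * (1 - α) / (1 - α + residual i)

noncomputable def diagEntry (i : ℕ) : ℝ := √(1 - α + residual α i)

noncomputable def offDiagEntry (i : ℕ) : ℝ := diagEntry α i - (1 - α) / diagEntry α i

noncomputable def upperMatrix (n : ℕ) : Matrix (Fin n) (Fin n) ℝ :=
  of fun i j => if i < j then offDiagEntry α i else if i = j then diagEntry α i else 0

variable {α}

section

variable (h₀ : 0 ≤ α) (h₁ : α < 1)
include h₀ h₁

theorem residual_nonneg (i : ℕ) : 0 ≤ residual α i := by
  induction i with
  | zero => exact h₀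
  | succ i ih => exact div_nonneg (mul_nonneg ih (by linarith)) (by linarith)

theorem diagEntry_pos (i : ℕ) : 0 < diagEntry α i :=
  Real.sqrt_pos.2 (by linarith [residual_nonneg h₀ h₁ i])

theorem diagEntry_sq (i : ℕ) : diagEntry α i ^ 2 = 1 - α + residual α i :=
  Real.sq_sqrt (by linarith [residual_nonneg h₀ h₁ i])

theorem diagEntry_mul_offDiagEntry (i : ℕ) : diagEntry α i * offDiagEntry α i = residual α i := by
  have hd := (diagEntry_pos h₀ h₁ i).ne'
  rw [offDiagEntry, mul_sub, mul_div_cancel₀ _ hd, ← sq, diagEntry_sq h₀ h₁]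
  ring

theorem offDiagEntry_sq (i : ℕ) :
    offDiagEntry α i ^ 2 = residual α i - residual α (i + 1) := by
  have hd := (diagEntry_pos h₀ h₁ i).ne'
  have hq : 0 < 1 - α + residual α i := by linarith [residual_nonneg h₀ h₁ i]
  rw [← mul_div_cancel_left₀ (offDiagEntry α i) hd, diagEntry_mul_offDiagEntry h₀ h₁, div_pow,
    diagEntry_sq h₀ h₁, residual]
  field_simp
  ring

theorem sum_offDiagEntry_sq (m : ℕ) :
    ∑ k ∈ range m, offDiagEntry α k ^ 2 = α - residual α m := by
  rw [sum_congr rfl fun k _ => offDiagEntry_sq h₀ h₁ k, sum_range_sub']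
  rfl

end

theorem upperMatrix_blockTriangular (n : ℕ) : (upperMatrix α n).BlockTriangular id := by
  intro i j (hji : j < i)
  simp [upperMatrix, hji.not_gt, hji.ne']

theorem upperMatrix_apply_self (n : ℕ) (i : Fin n) : upperMatrix α n i i = diagEntry α i := by
  simp [upperMatrix]

theorem transpose_mul_upperMatrix_apply_of_le {n : ℕ} (h₀ : 0 ≤ α) (h₁ : α < 1) {i j : Fin n}
    (hij : i ≤ j) : ((upperMatrix α n)ᵀ * upperMatrix α n) i j = Gmat n α i j := by
  have hcol : ∑ k ∈ Iio i, upperMatrix α n k i * upperMatrix α n k j = α - residual α i := by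
    rw [← sum_offDiagEntry_sq h₀ h₁, ← Nat.Iio_eq_range, ← Fin.map_valEmbedding_Iio, sum_map]
    refine sum_congr rfl fun k hk => ?_
    have hki := mem_Iio.1 hk
    simp [upperMatrix, hki, hki.trans_le hij, sq]
  rw [(upperMatrix_blockTriangular n).transpose_mul_self_apply, hcol, Gmat_apply,
    upperMatrix_apply_self]
  rcases hij.lt_or_eq with hij | rfl
  · simp [upperMatrix, hij, hij.ne, diagEntry_mul_offDiagEntry h₀ h₁]
  · simp [upperMatrix, ← sq, diagEntry_sq h₀ h₁]

theorem transpose_mul_upperMatrix {n : ℕ} (h₀ : 0 ≤ α) (h₁ : α < 1) :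
    (upperMatrix α n)ᵀ * upperMatrix α n = Gmat n α := by
  ext i j
  rcases le_total i j with hij | hji
  · exact transpose_mul_upperMatrix_apply_of_le h₀ h₁ hij
  · rw [(isSymm_transpose_mul_self _).apply j i, transpose_mul_upperMatrix_apply_of_le h₀ h₁ hji,
      Gmat_apply, Gmat_apply]
    simp_rw [eq_comm (a := j)]

end Equiangular

open Equiangular in
/-- There is a unique upper triangular equiangular matrix with positive
diagonal; its entries satisfy the stated recurrences. -/
theorem stmt14 (n : ℕ) (hn : 1 ≤ n) (α : ℝ) (hα₁ : 0 < α) (hα₂ : α < 1) :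
    (∃! Shat : Matrix (Fin n) (Fin n) ℝ,
      (∀ i j : Fin n, (j : ℕ) < (i : ℕ) → Shat i j = 0) ∧
      (∀ i : Fin n, 0 < Shat i i) ∧
      Shatᵀ * Shat = Gmat n α) ∧
    (∀ Shat : Matrix (Fin n) (Fin n) ℝ,
      (∀ i j : Fin n, (j : ℕ) < (i : ℕ) → Shat i j = 0) →
      (∀ i : Fin n, 0 < Shat i i) →
      Shatᵀ * Shat = Gmat n α →
        Shat ⟨0, hn⟩ ⟨0, hn⟩ = 1 ∧
        (∀ i j : Fin n, (i : ℕ) < (j : ℕ) →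
          Shat i j = Shat i i - (1 - α) / Shat i i) ∧
        (∀ i : Fin n,
          (Shat i i) ^ 2 = 1 - ∑ k ∈ Finset.Iio i, (Shat k i) ^ 2)) := by
  have hS_tri := upperMatrix_blockTriangular (α := α) n
  have hS_pos (i : Fin n) : 0 < upperMatrix α n i i := by
    rw [upperMatrix_apply_self]; exact diagEntry_pos hα₁.le hα₂ i
  have hS_gram := transpose_mul_upperMatrix (n := n) hα₁.le hα₂
  have huniq (A : Matrix (Fin n) (Fin n) ℝ) (hA : ∀ i j : Fin n, (j : ℕ) < i → A i j = 0)
      (hA₀ : ∀ i, 0 < A i i) (hAG : Aᵀ * A = Gmat n α) : A = upperMatrix α n :=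
    BlockTriangular.eq_of_transpose_mul_self_eq (fun i j => hA i j) hS_tri hA₀ hS_pos
      (hAG.trans hS_gram.symm)
  refine ⟨⟨upperMatrix α n, ⟨fun i j => @hS_tri i j, hS_pos, hS_gram⟩,
    fun A ⟨hA, hA₀, hAG⟩ => huniq A hA hA₀ hAG⟩, fun A hA hA₀ hAG => ?_⟩
  have hdiag (i : Fin n) : A i i ^ 2 = 1 - ∑ k ∈ Iio i, A k i ^ 2 := by
    rw [BlockTriangular.sq_diag_eq (fun i j => hA i j), hAG, Gmat_apply, if_pos rfl]
  refine ⟨?_, fun i j (hij : i < j) => ?_, hdiag⟩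
  · have h0 := hdiag ⟨0, hn⟩
    rw [Iio_eq_empty.2 fun k _ => Nat.zero_le k.val, sum_empty, sub_zero] at h0
    exact (pow_eq_one_iff_of_nonneg (hA₀ _).le two_ne_zero).1 h0
  · simp [huniq A hA hA₀ hAG, upperMatrix, hij, offDiagEntry]
end

section
/- Let A be a real symmetric n×n matrix with exactly two distinct eigenvalues λ₁ (with multiplicity n-1) and λ₂, both of the same sign. Then there exist a nonzero real r and an invertible equiangular matrix S with some parameter α ∈ (-1/(n-1), 1) such that A = r·S·Sᵀ. -/
open Matrix Polynomial

/-!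
Put `r := ((n - 1)λ₁ + λ₂) / n` and `α := (λ₂ - λ₁) / (n r)`, so that
`r • Gmat n α = λ₁ I + ((λ₂ - λ₁) / n) 𝟙𝟙ᵀ`. The rank-one matrix `𝟙𝟙ᵀ` has spectrum
`{n, 0, …, 0}`, hence `r • Gmat n α` has the characteristic polynomial of `A`. Real symmetric
matrices with the same characteristic polynomial have the same sorted eigenvalues `μ`, so
`A = U diag(μ) Uᵀ` and `r • Gmat n α = W diag(μ) Wᵀ` with `U`, `W` orthogonal. The sign condition
makes every `μᵢ / r` positive, and `S := U diag(√(μ / r)) Wᵀ` is the required factor.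
-/

namespace Matrix

variable {n : Type*} [Fintype n] [DecidableEq n]

theorem UnitaryGroup.transpose_mul_self_real (U : unitaryGroup n ℝ) :
    (U : Matrix n n ℝ)ᵀ * U = 1 := by
  simpa [star_eq_conjTranspose] using UnitaryGroup.star_mul_self U

theorem UnitaryGroup.mul_transpose_mul_transpose_real (A : Matrix n n ℝ)
    (W : unitaryGroup n ℝ) :
    A * (W : Matrix n n ℝ)ᵀ * (A * (W : Matrix n n ℝ)ᵀ)ᵀ = A * Aᵀ := by
  rw [transpose_mul, transpose_transpose, Matrix.mul_assoc,
    ← Matrix.mul_assoc _ (W : Matrix n n ℝ), transpose_mul_self_real, Matrix.one_mul]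

theorem UnitaryGroup.transpose_mul_mul_real (U : unitaryGroup n ℝ) (A : Matrix n n ℝ) :
    ((U : Matrix n n ℝ) * A)ᵀ * (U * A) = Aᵀ * A := by
  rw [transpose_mul, Matrix.mul_assoc, ← Matrix.mul_assoc _ (U : Matrix n n ℝ),
    transpose_mul_self_real, Matrix.one_mul]

theorem IsHermitian.eq_eigenvectorUnitary_mul_diagonal_mul_transpose {M : Matrix n n ℝ}
    (hM : M.IsHermitian) :
    M = (hM.eigenvectorUnitary : Matrix n n ℝ) * diagonal hM.eigenvalues *
      (hM.eigenvectorUnitary : Matrix n n ℝ)ᵀ := by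
  conv_lhs => rw [hM.spectral_theorem, Unitary.conjStarAlgAut_apply]
  simp [star_eq_conjTranspose]

theorem IsHermitian.exists_isUnit_det_smul_mul_transpose_of_charpoly_eq {M N : Matrix n n ℝ}
    (hM : M.IsHermitian) (hN : N.IsHermitian) (h : M.charpoly = N.charpoly) {c : ℝ}
    (hc : ∀ i, 0 < c * hM.eigenvalues i) :
    ∃ S : Matrix n n ℝ, IsUnit S.det ∧ M = c • (S * Sᵀ) ∧ N = c • (Sᵀ * S) := by
  have hMU := hM.eq_eigenvectorUnitary_mul_diagonal_mul_transpose
  have hNW := hN.eq_eigenvectorUnitary_mul_diagonal_mul_transpose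
  rw [(hN.eigenvalues_eq_eigenvalues_iff hM).2 h.symm] at hNW
  set U := hM.eigenvectorUnitary
  set W := hN.eigenvectorUnitary
  set μ := hM.eigenvalues
  have hμc (i : n) : 0 < μ i / c := div_pos_iff.2 (mul_pos_iff.1 (mul_comm c (μ i) ▸ hc i))
  set D := diagonal fun i => √(μ i / c)
  have hDt : Dᵀ = D := diagonal_transpose _
  have hDD : c • (D * D) = diagonal μ := by
    rw [diagonal_mul_diagonal, ← diagonal_smul]
    congr 1
    funext i
    have hc0 : c ≠ 0 := left_ne_zero_of_mul (hc i).ne'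
    simp [Real.mul_self_sqrt (hμc i).le, mul_div_cancel₀ _ hc0]
  refine ⟨U * D * (W : Matrix n n ℝ)ᵀ, ?_, ?_, ?_⟩
  · simp only [det_mul, det_transpose, D, det_diagonal]
    refine ((UnitaryGroup.det_isUnit U).mul ?_).mul (UnitaryGroup.det_isUnit W)
    exact isUnit_iff_ne_zero.2 <|
      Finset.prod_ne_zero_iff.2 fun i _ => (Real.sqrt_pos.2 (hμc i)).ne'
  · rw [UnitaryGroup.mul_transpose_mul_transpose_real, transpose_mul, hDt, hMU, ← hDD]
    simp only [Matrix.smul_mul, Matrix.mul_smul, Matrix.mul_assoc]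
  · rw [Matrix.mul_assoc, UnitaryGroup.transpose_mul_mul_real, transpose_mul,
      transpose_transpose, hDt, hNW, ← hDD]
    simp only [Matrix.smul_mul, Matrix.mul_smul, Matrix.mul_assoc]

theorem IsHermitian.eigenvalues_mem_roots_charpoly {M : Matrix n n ℝ} (hM : M.IsHermitian)
    (i : n) : hM.eigenvalues i ∈ M.charpoly.roots := by
  simp [hM.roots_charpoly_eq_eigenvalues]

theorem charpoly_scalar_add_vecMulVec {R : Type*} [CommRing R] [Nonempty n] (a : R)
    (u v : n → R) :
    (scalar n a + vecMulVec u v).charpoly =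
      (X - C a) ^ (Fintype.card n - 1) * (X - C a - C (u ⬝ᵥ v)) := by
  obtain ⟨m, hm⟩ := Nat.exists_eq_add_one.2 (Fintype.card_pos (α := n))
  rw [add_comm, ← sub_neg_eq_add, ← map_neg, charpoly_sub_scalar, charpoly_vecMulVec, hm,
    Nat.add_sub_cancel, smul_eq_C_mul]
  simp only [sub_comp, pow_comp, mul_comp, X_comp, C_comp, map_neg, ← sub_eq_add_neg]
  ring

end Matrix

theorem Polynomial.eq_or_eq_of_mem_roots_X_sub_C_pow_mul {K : Type*} [Field K] {a b x : K}
    {k : ℕ} (hx : x ∈ ((X - C a) ^ k * (X - C b)).roots) : x = a ∨ x = b := by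
  have hroot := (mem_roots'.1 hx).2
  simp only [IsRoot.def, eval_mul, eval_pow, eval_sub, eval_X, eval_C, mul_eq_zero,
    pow_eq_zero_iff', sub_eq_zero] at hroot
  tauto

theorem isSymm_Gmat (n : ℕ) (α : ℝ) : (Gmat n α).IsSymm :=
  IsSymm.ext fun i j => by simp [Gmat, one_apply, eq_comm]

theorem smul_Gmat_eq_scalar_add_vecMulVec (n : ℕ) (r α : ℝ) :
    r • Gmat n α = scalar (Fin n) (r * (1 - α)) + vecMulVec (fun _ => r * α) 1 := by
  ext i j
  by_cases hij : i = j
  · simp [Gmat, hij, mul_sub]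
  · simp [Gmat, hij]

theorem charpoly_smul_Gmat (n : ℕ) [NeZero n] (r α : ℝ) :
    (r • Gmat n α).charpoly =
      (X - C (r * (1 - α))) ^ (n - 1) * (X - C (r * (1 + ((n : ℝ) - 1) * α))) := by
  rw [smul_Gmat_eq_scalar_add_vecMulVec, charpoly_scalar_add_vecMulVec, Fintype.card_fin,
    dotProduct_one, sub_sub, ← C_add]
  congr 3
  simp only [Finset.sum_const, Finset.card_univ, Fintype.card_fin, nsmul_eq_mul]
  ring

theorem exists_mul_one_sub_and_mul_one_add_mul_eq {m a b : ℝ} (hm : 0 < m) (hab : 0 < a * b) :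
    ∃ r α : ℝ, 0 < r * a ∧ 0 < r * b ∧ -1 / m < α ∧ α < 1 ∧
      r * (1 - α) = a ∧ r * (1 + m * α) = b := by
  set s := m * a + b
  have hsa : 0 < s * a := by nlinarith [mul_nonneg hm.le (mul_self_nonneg a)]
  have hsb : 0 < s * b := by nlinarith [mul_nonneg hm.le (mul_self_nonneg b)]
  have hs : s ≠ 0 := left_ne_zero_of_mul hsa.ne'
  set r := s / (m + 1)
  set α := (b - a) / s
  have hra : 0 < r * a := by rw [div_mul_eq_mul_div]; exact div_pos hsa (by linarith)
  have hrb : 0 < r * b := by rw [div_mul_eq_mul_div]; exact div_pos hsb (by linarith)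
  have hm1 : m + 1 ≠ 0 := by linarith
  have ha : r * (1 - α) = a := by simp only [r, α]; field_simp; simp only [s]; ring
  have hb : r * (1 + m * α) = b := by simp only [r, α]; field_simp; simp only [s]; ring
  refine ⟨r, α, hra, hrb, ?_, ?_, ha, hb⟩
  · rw [← hb, ← mul_assoc] at hrb
    have := pos_of_mul_pos_right hrb (mul_self_nonneg r)
    rw [div_lt_iff₀ hm]; linarith
  · rw [← ha, ← mul_assoc] at hra
    linarith [pos_of_mul_pos_right hra (mul_self_nonneg r)]

theorem stmt15_general (n : ℕ) (hn : 2 ≤ n) (A : Matrix (Fin n) (Fin n) ℝ)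
    (hA : A.IsSymm) (lam₁ lam₂ : ℝ)
    (hsign : lam₁ * lam₂ > 0)
    (hchar : A.charpoly = (X - C lam₁) ^ (n - 1) * (X - C lam₂)) :
    ∃ (r α : ℝ) (S : Matrix (Fin n) (Fin n) ℝ),
      r ≠ 0 ∧ -1 / ((n : ℝ) - 1) < α ∧ α < 1 ∧
      IsUnit S.det ∧ Sᵀ * S = Gmat n α ∧ A = r • (S * Sᵀ) := by
  have : NeZero n := ⟨by omega⟩
  have hn₁ : (0 : ℝ) < n - 1 := by
    rw [sub_pos]; exact_mod_cast hn
  obtain ⟨r, α, hr₁, hr₂, hα₀, hα₁, h₁, h₂⟩ :=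
    exists_mul_one_sub_and_mul_one_add_mul_eq hn₁ hsign
  have hr : r ≠ 0 := left_ne_zero_of_mul hr₁.ne'
  have hAH : A.IsHermitian := isHermitian_iff_isSymm.2 hA
  have hGH : (r • Gmat n α).IsHermitian := isHermitian_iff_isSymm.2 ((isSymm_Gmat n α).smul r)
  have hcharG : A.charpoly = (r • Gmat n α).charpoly := by
    rw [charpoly_smul_Gmat, h₁, h₂, hchar]
  have hpos (i : Fin n) : 0 < r * hAH.eigenvalues i := by
    rcases eq_or_eq_of_mem_roots_X_sub_C_pow_mul (hchar ▸ hAH.eigenvalues_mem_roots_charpoly i)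
      with h | h <;> rw [h] <;> assumption
  obtain ⟨S, hS, hAS, hGS⟩ :=
    hAH.exists_isUnit_det_smul_mul_transpose_of_charpoly_eq hGH hcharG hpos
  exact ⟨r, α, S, hr, hα₀, hα₁, hS, (smul_right_injective _ hr hGS).symm, hAS⟩

/-- A symmetric matrix with exactly two distinct eigenvalues of the same
sign, one of multiplicity `n-1`, factors as `r·S·Sᵀ` with `S` an invertible
equiangular matrix. -/
theorem stmt15 (n : ℕ) (hn : 2 ≤ n) (A : Matrix (Fin n) (Fin n) ℝ)
    (hA : A.IsSymm) (lam₁ lam₂ : ℝ) (hne : lam₁ ≠ lam₂)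
    (hsign : lam₁ * lam₂ > 0)
    (hchar : A.charpoly = (X - C lam₁) ^ (n - 1) * (X - C lam₂)) :
    ∃ (r α : ℝ) (S : Matrix (Fin n) (Fin n) ℝ),
      r ≠ 0 ∧ -1 / ((n : ℝ) - 1) < α ∧ α < 1 ∧
      IsUnit S.det ∧ Sᵀ * S = Gmat n α ∧ A = r • (S * Sᵀ) :=
  stmt15_general n hn A hA lam₁ lam₂ hsign hchar
end

section
/- For any n ≥ 2, α ∈ (0,1), and nonzero real r, the polynomial g_n(x) = Σ_{k=0}^{n} (-1)^k · C(n,k) · r^k / ((1-α)^{k-1}(1+(k-1)α)) · x^{n-k} (with the k=0 term being x^n) has at least two nonreal complex roots. -/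
/-!
If all roots of a real monic polynomial of degree `n` are real, Cauchy–Schwarz
`(Σ xᵢ)² ≤ n Σ xᵢ²` together with `Σ xᵢ² = e₁² - 2 e₂` gives Newton's inequality
`2 n e₂ ≤ (n - 1) e₁²`. For `g_n` Vieta gives `e₁ = n r` and
`e₂ = C(n,2) r² / (1 - α²)`, so the inequality reads `1 ≤ 1 - α²`, which fails for
`0 < α < 1`. Hence `g_n` has a nonreal root `z`, and since its coefficients are real,
`conj z` is another one.
-/

open Polynomial

/-- The coefficient of `x^(n-k)` in `g_n`: `(-1)^k C(n,k) r^k /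
((1-α)^(k-1) (1+(k-1)α))` (with `(1-α)^(k-1)` read as a `zpow`). -/
noncomputable def gCoeff (n : ℕ) (α r : ℝ) (k : ℕ) : ℝ :=
  (-1) ^ k * (n.choose k : ℝ) * r ^ k /
    ((1 - α) ^ ((k : ℤ) - 1) * (1 + ((k : ℝ) - 1) * α))

/-- The polynomial `g_n(x) = Σ_{k=0}^{n} (-1)^k C(n,k) r^k /
((1-α)^(k-1)(1+(k-1)α)) · x^(n-k)` over `ℂ`. -/
noncomputable def gPoly (n : ℕ) (α r : ℝ) : Polynomial ℂ :=
  ∑ k ∈ Finset.range (n + 1), C ((gCoeff n α r k : ℝ) : ℂ) * X ^ (n - k)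

namespace Multiset

variable {R : Type*} [CommRing R]

lemma esymm_one_eq_sum (s : Multiset R) : s.esymm 1 = s.sum := by
  simp [esymm, powersetCard_one, map_map]

lemma esymm_cons_succ (a : R) (s : Multiset R) (k : ℕ) :
    (a ::ₘ s).esymm (k + 1) = s.esymm (k + 1) + a * s.esymm k := by
  simp only [esymm, powersetCard_cons, map_add, sum_add, map_map, Function.comp_def, prod_cons]
  rw [← sum_map_mul_left]

lemma sum_map_sq_eq_sq_sum_sub_two_mul_esymm_two (s : Multiset R) :
    (s.map (· ^ 2)).sum = s.sum ^ 2 - 2 * s.esymm 2 := by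
  induction s using Multiset.induction with
  | empty => simp [esymm, powersetCard_zero_right]
  | cons a s ih =>
    rw [map_cons, sum_cons, ih, sum_cons, esymm_cons_succ, esymm_one_eq_sum]
    ring

variable [LinearOrder R] [IsStrictOrderedRing R]

lemma sq_sum_le_card_mul_sum_map_sq (s : Multiset R) :
    s.sum ^ 2 ≤ card s * (s.map (· ^ 2)).sum := by
  obtain ⟨l, rfl⟩ := Quot.exists_rep s
  have := sq_sum_le_card_mul_sum_sq (s := Finset.univ) (f := fun i : Fin l.length => l[i.1])
  rwa [Fin.sum_univ_getElem, Fin.sum_univ_fun_getElem l (· ^ 2), Finset.card_univ,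
    Fintype.card_fin] at this

/-- Newton's inequality `e₂ / C(n,2) ≤ (e₁ / n)²`. -/
lemma two_mul_card_mul_esymm_two_le (s : Multiset R) :
    2 * card s * s.esymm 2 ≤ (card s - 1) * s.sum ^ 2 := by
  have := sq_sum_le_card_mul_sum_map_sq s
  rw [sum_map_sq_eq_sq_sum_sub_two_mul_esymm_two] at this
  linear_combination this

end Multiset

namespace Polynomial

lemma Monic.two_mul_natDegree_mul_coeff_le_of_splits {K : Type*} [Field K] [LinearOrder K]
    [IsStrictOrderedRing K] {p : K[X]} (hm : p.Monic) (hs : p.Splits)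
    (hd : 2 ≤ p.natDegree) :
    2 * p.natDegree * p.coeff (p.natDegree - 2) ≤
      (p.natDegree - 1) * p.coeff (p.natDegree - 1) ^ 2 := by
  have hcard := splits_iff_card_roots.mp hs
  have h₁ := coeff_eq_esymm_roots_of_card hcard (k := p.natDegree - 1) (by omega)
  have h₂ := coeff_eq_esymm_roots_of_card hcard (k := p.natDegree - 2) (by omega)
  rw [hm.leadingCoeff, Nat.sub_sub_self (by omega), Multiset.esymm_one_eq_sum] at h₁
  rw [hm.leadingCoeff, Nat.sub_sub_self hd] at h₂
  have := p.roots.two_mul_card_mul_esymm_two_le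
  rw [hcard] at this
  rw [h₁, h₂]
  linear_combination this

lemma exists_aeval_eq_zero_im_ne_zero_of_not_splits {p : ℝ[X]} (hp : ¬ p.Splits) :
    ∃ z : ℂ, aeval z p = 0 ∧ z.im ≠ 0 := by
  by_contra! h
  refine hp (.of_splits_map_of_injective (algebraMap ℝ ℂ).injective (IsAlgClosed.splits _) ?_)
  intro z hz
  have hz : aeval z p = 0 := by
    simpa [eval_map_algebraMap] using (mem_roots'.mp hz).2
  exact ⟨z.re, Complex.ext rfl (h z hz).symm⟩

lemma exists_two_nonreal_roots_of_not_splits {p : ℝ[X]} (hp : ¬ p.Splits) :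
    ∃ z w : ℂ, z ≠ w ∧ z.im ≠ 0 ∧ w.im ≠ 0 ∧ aeval z p = 0 ∧ aeval w p = 0 := by
  obtain ⟨z, hz, him⟩ := exists_aeval_eq_zero_im_ne_zero_of_not_splits hp
  refine ⟨z, starRingEnd ℂ z, fun h => him (Complex.conj_eq_iff_im.mp h.symm), him,
    by simpa using him, hz, by rw [aeval_conj, hz, map_zero]⟩

end Polynomial

noncomputable def gPolyReal (n : ℕ) (α r : ℝ) : ℝ[X] :=
  ∑ k ∈ Finset.range (n + 1), C (gCoeff n α r k) * X ^ (n - k)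

section gPolyReal

variable {n : ℕ} {α r : ℝ}

lemma isRoot_gPoly_iff {z : ℂ} : (gPoly n α r).IsRoot z ↔ aeval z (gPolyReal n α r) = 0 := by
  have : gPoly n α r = (gPolyReal n α r).map (algebraMap ℝ ℂ) := by
    simp [gPoly, gPolyReal, Polynomial.map_sum]
  rw [IsRoot, this, eval_map_algebraMap]

lemma coeff_gPolyReal_sub {j : ℕ} (hj : j ≤ n) :
    (gPolyReal n α r).coeff (n - j) = gCoeff n α r j := by
  rw [gPolyReal, finsetSum_coeff, Finset.sum_eq_single j]
  · simp
  · intro k hk hkj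
    rw [coeff_C_mul_X_pow, if_neg (by have := Finset.mem_range.mp hk; omega)]
  · exact fun hj' => absurd (Finset.mem_range.mpr (by omega)) hj'

lemma gCoeff_zero (hα : α ≠ 1) : gCoeff n α r 0 = 1 := by
  have : 1 - α ≠ 0 := sub_ne_zero.mpr hα.symm
  norm_num [gCoeff]
  rw [← sub_eq_add_neg]
  exact inv_mul_cancel₀ this

lemma gCoeff_one : gCoeff n α r 1 = -(n * r) := by
  simp [gCoeff]

lemma gCoeff_two : gCoeff n α r 2 = n.choose 2 * r ^ 2 / ((1 - α) * (1 + α)) := by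
  norm_num [gCoeff]

lemma natDegree_gPolyReal_le : (gPolyReal n α r).natDegree ≤ n :=
  natDegree_sum_le_of_forall_le _ _ fun _ _ => (natDegree_C_mul_X_pow_le _ _).trans (by omega)

lemma coeff_gPolyReal_natDegree (hα : α ≠ 1) : (gPolyReal n α r).coeff n = 1 := by
  simpa [gCoeff_zero hα] using coeff_gPolyReal_sub (n := n) (α := α) (r := r) (Nat.zero_le _)

lemma gPolyReal_monic (hα : α ≠ 1) : (gPolyReal n α r).Monic :=
  monic_of_natDegree_le_of_coeff_eq_one n natDegree_gPolyReal_le (coeff_gPolyReal_natDegree hα)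

lemma natDegree_gPolyReal (hα : α ≠ 1) : (gPolyReal n α r).natDegree = n :=
  natDegree_eq_of_le_of_coeff_ne_zero natDegree_gPolyReal_le
    (by simp [coeff_gPolyReal_natDegree hα])

lemma gPolyReal_not_splits (hn : 2 ≤ n) (hα₀ : 0 < α) (hα₁ : α < 1) (hr : r ≠ 0) :
    ¬ (gPolyReal n α r).Splits := by
  intro hs
  have hdeg := natDegree_gPolyReal (n := n) (r := r) hα₁.ne
  have hnewton := (gPolyReal_monic hα₁.ne).two_mul_natDegree_mul_coeff_le_of_splits hs
    (by omega)
  rw [hdeg, coeff_gPolyReal_sub (by omega), coeff_gPolyReal_sub (by omega), gCoeff_one,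
    gCoeff_two, Nat.cast_choose_two] at hnewton
  have hβ₀ : 0 < (1 - α) * (1 + α) := by nlinarith
  have hβ₁ : (1 - α) * (1 + α) < 1 := by nlinarith
  have hc : 0 < ((n : ℝ) - 1) * n ^ 2 * r ^ 2 := by
    have : (2 : ℝ) ≤ n := by exact_mod_cast hn
    exact mul_pos (mul_pos (by linarith) (by positivity)) (by positivity)
  have hlt :
      ((n : ℝ) - 1) * n ^ 2 * r ^ 2 < ((n : ℝ) - 1) * n ^ 2 * r ^ 2 / ((1 - α) * (1 + α)) :=
    (lt_div_iff₀ hβ₀).mpr (mul_lt_of_lt_one_right hc hβ₁)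
  have : 2 * (n : ℝ) * (n * (n - 1) / 2 * r ^ 2 / ((1 - α) * (1 + α)))
      = ((n : ℝ) - 1) * n ^ 2 * r ^ 2 / ((1 - α) * (1 + α)) := by ring
  linarith

end gPolyReal

/-- For `n ≥ 2`, `0 < α < 1`, `r ≠ 0`, the polynomial `g_n` has at least two
(distinct) nonreal complex roots. -/
theorem stmt17 (n : ℕ) (hn : 2 ≤ n) (α r : ℝ) (hα₁ : 0 < α) (hα₂ : α < 1)
    (hr : r ≠ 0) :
    ∃ z w : ℂ, z ≠ w ∧ z.im ≠ 0 ∧ w.im ≠ 0 ∧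
      (gPoly n α r).IsRoot z ∧ (gPoly n α r).IsRoot w := by
  obtain ⟨z, w, hzw, hz, hw, hz₀, hw₀⟩ :=
    exists_two_nonreal_roots_of_not_splits (gPolyReal_not_splits hn hα₁ hα₂ hr)
  exact ⟨z, w, hzw, hz, hw, isRoot_gPoly_iff.mpr hz₀, isRoot_gPoly_iff.mpr hw₀⟩
end

section
/- If S₁ and S₂ are doubly equiangular n×n matrices with parameters α₁, α₂ ∈ (-1/(n-1), 1) respectively (i.e., SᵢᵀSᵢ = SᵢSᵢᵀ = G_{αᵢ} and Sᵢe = Sᵢᵀe = √(1+(n-1)αᵢ)·e), then (S₁S₂)(S₁S₂)ᵀ = (S₁S₂)ᵀ(S₁S₂) = c·G_{α'} where c = 1 + (n-1)α₁α₂ and α' = (α₁ + α₂ + (n-2)α₁α₂)/c; in particular S₁S₂ is a normal matrix. -/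
open Matrix

lemma mulJ {n : ℕ} (S : Matrix (Fin n) (Fin n) ℝ) (r : ℝ)
    (h : S.mulVec (fun _ => 1) = r • ((fun _ => 1) : Fin n → ℝ)) :
    S * (Matrix.of fun _ _ => (1 : ℝ)) = r • (Matrix.of fun _ _ => (1 : ℝ)) := by
  ext i j
  have := congrFun h i
  simpa [Matrix.mul_apply, Matrix.mulVec, dotProduct] using this

lemma Jmul {n : ℕ} (S : Matrix (Fin n) (Fin n) ℝ) (r : ℝ)
    (h : Sᵀ.mulVec (fun _ => 1) = r • ((fun _ => 1) : Fin n → ℝ)) :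
    (Matrix.of fun _ _ => (1 : ℝ)) * S = r • (Matrix.of fun _ _ => (1 : ℝ)) := by
  ext i j
  have := congrFun h j
  simpa [Matrix.mul_apply, Matrix.mulVec, dotProduct, Matrix.transpose_apply] using this

lemma conjG {n : ℕ} (S T : Matrix (Fin n) (Fin n) ℝ) (α β r : ℝ)
    (hG : S * T = Gmat n α)
    (hl : S * (Matrix.of fun _ _ => (1 : ℝ)) = r • (Matrix.of fun _ _ => (1 : ℝ)))
    (hr : (Matrix.of fun _ _ => (1 : ℝ)) * T = r • (Matrix.of fun _ _ => (1 : ℝ))) :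
    S * Gmat n β * T = (1 - β) • Gmat n α
      + (β * (r * r)) • (Matrix.of fun _ _ => (1 : ℝ)) := by
  rw [Gmat, mul_add, mul_smul_comm, mul_one, mul_smul_comm, add_mul,
    smul_mul_assoc, smul_mul_assoc, hG, hl, smul_mul_assoc, hr, smul_smul, smul_smul,
    mul_assoc]

lemma combineG {n : ℕ} (α β c γ : ℝ) (hc : c ≠ 0)
    (h1 : c * (1 - γ / c) = (1 - β) * (1 - α))
    (h2 : c * (γ / c) = (1 - β) * α + β * (1 + ((n : ℝ) - 1) * α)) :
    (1 - β) • Gmat n α + (β * (1 + ((n : ℝ) - 1) * α)) • (Matrix.of fun _ _ => (1 : ℝ))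
      = c • Gmat n (γ / c) := by
  simp only [Gmat, smul_add, smul_smul, h1, h2]
  module

/-- The product of two doubly equiangular matrices is a factor of a doubly
equiangular matrix, hence normal. -/
theorem stmt18 (n : ℕ) (hn : 2 ≤ n) (α₁ α₂ : ℝ)
    (hα₁ : -1 / ((n : ℝ) - 1) < α₁) (hα₁' : α₁ < 1)
    (hα₂ : -1 / ((n : ℝ) - 1) < α₂) (hα₂' : α₂ < 1)
    (S₁ S₂ : Matrix (Fin n) (Fin n) ℝ)
    (h₁ : S₁ᵀ * S₁ = Gmat n α₁) (h₁' : S₁ * S₁ᵀ = Gmat n α₁)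
    (h₁e : S₁.mulVec (fun _ => 1)
      = Real.sqrt (1 + ((n : ℝ) - 1) * α₁) • ((fun _ => 1) : Fin n → ℝ))
    (h₁e' : S₁ᵀ.mulVec (fun _ => 1)
      = Real.sqrt (1 + ((n : ℝ) - 1) * α₁) • ((fun _ => 1) : Fin n → ℝ))
    (h₂ : S₂ᵀ * S₂ = Gmat n α₂) (h₂' : S₂ * S₂ᵀ = Gmat n α₂)
    (h₂e : S₂.mulVec (fun _ => 1)
      = Real.sqrt (1 + ((n : ℝ) - 1) * α₂) • ((fun _ => 1) : Fin n → ℝ))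
    (h₂e' : S₂ᵀ.mulVec (fun _ => 1)
      = Real.sqrt (1 + ((n : ℝ) - 1) * α₂) • ((fun _ => 1) : Fin n → ℝ)) :
    ((S₁ * S₂) * (S₁ * S₂)ᵀ
        = (1 + ((n : ℝ) - 1) * α₁ * α₂)
            • Gmat n ((α₁ + α₂ + ((n : ℝ) - 2) * α₁ * α₂)
                / (1 + ((n : ℝ) - 1) * α₁ * α₂)) ∧
     (S₁ * S₂)ᵀ * (S₁ * S₂)
        = (1 + ((n : ℝ) - 1) * α₁ * α₂)
            • Gmat n ((α₁ + α₂ + ((n : ℝ) - 2) * α₁ * α₂)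
                / (1 + ((n : ℝ) - 1) * α₁ * α₂))) ∧
    (S₁ * S₂) * (S₁ * S₂)ᵀ = (S₁ * S₂)ᵀ * (S₁ * S₂) := by
  have hm : (0 : ℝ) < (n : ℝ) - 1 := by
    have : (2 : ℝ) ≤ (n : ℝ) := by exact_mod_cast hn
    linarith
  have hx1 : (-1 : ℝ) < ((n : ℝ) - 1) * α₁ := by
    have := (div_lt_iff₀ hm).mp hα₁; nlinarith
  have hx2 : (-1 : ℝ) < ((n : ℝ) - 1) * α₂ := by
    have := (div_lt_iff₀ hm).mp hα₂; nlinarith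
  have hpos1 : (0 : ℝ) ≤ 1 + ((n : ℝ) - 1) * α₁ := by linarith
  have hpos2 : (0 : ℝ) ≤ 1 + ((n : ℝ) - 1) * α₂ := by linarith
  have hsq1 : Real.sqrt (1 + ((n : ℝ) - 1) * α₁) * Real.sqrt (1 + ((n : ℝ) - 1) * α₁)
      = 1 + ((n : ℝ) - 1) * α₁ := Real.mul_self_sqrt hpos1
  have hsq2 : Real.sqrt (1 + ((n : ℝ) - 1) * α₂) * Real.sqrt (1 + ((n : ℝ) - 1) * α₂)
      = 1 + ((n : ℝ) - 1) * α₂ := Real.mul_self_sqrt hpos2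
  have hc : (0 : ℝ) < 1 + ((n : ℝ) - 1) * α₁ * α₂ := by
    nlinarith [mul_pos hm (mul_pos (show (0:ℝ) < 1 + ((n:ℝ)-1) * α₁ by linarith)
        (show (0:ℝ) < 1 + ((n:ℝ)-1) * α₂ by linarith)),
      mul_pos (mul_pos hm (show (0:ℝ) < 1 - α₁ by linarith))
        (mul_pos hm (show (0:ℝ) < 1 - α₂ by linarith)),
      mul_pos hm (show (0:ℝ) < (n:ℝ) by positivity)]
  set c : ℝ := 1 + ((n : ℝ) - 1) * α₁ * α₂ with hcdef
  set γ : ℝ := α₁ + α₂ + ((n : ℝ) - 2) * α₁ * α₂ with hγdef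
  have hcne : c ≠ 0 := ne_of_gt hc
  have key1 : c * (1 - γ / c) = (1 - α₂) * (1 - α₁) := by
    field_simp; ring
  have key2 : c * (γ / c) = (1 - α₂) * α₁ + α₂ * (1 + ((n : ℝ) - 1) * α₁) := by
    field_simp; ring
  have key1' : c * (1 - γ / c) = (1 - α₁) * (1 - α₂) := by
    rw [key1]; ring
  have key2' : c * (γ / c) = (1 - α₁) * α₂ + α₁ * (1 + ((n : ℝ) - 1) * α₂) := by
    rw [key2]; ring
  have e1 : (S₁ * S₂) * (S₁ * S₂)ᵀ = c • Gmat n (γ / c) := by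
    have : (S₁ * S₂) * (S₁ * S₂)ᵀ = S₁ * Gmat n α₂ * S₁ᵀ := by
      rw [Matrix.transpose_mul, ← h₂']
      noncomm_ring
    rw [this, conjG S₁ S₁ᵀ α₁ α₂ _ h₁'
        (mulJ S₁ _ h₁e) (Jmul S₁ᵀ _ (by rwa [Matrix.transpose_transpose])),
      hsq1, combineG α₁ α₂ c γ hcne key1 key2]
  have e2 : (S₁ * S₂)ᵀ * (S₁ * S₂) = c • Gmat n (γ / c) := by
    have : (S₁ * S₂)ᵀ * (S₁ * S₂) = S₂ᵀ * Gmat n α₁ * S₂ := by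
      rw [Matrix.transpose_mul, ← h₁]
      noncomm_ring
    rw [this, conjG S₂ᵀ S₂ α₂ α₁ _ h₂ (mulJ S₂ᵀ _ h₂e') (Jmul S₂ _ h₂e'),
      hsq2, combineG α₂ α₁ c γ hcne key1' key2']
  exact ⟨⟨e1, e2⟩, by rw [e1, e2]⟩
end
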